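/- Let Γ^i_{jk} be a torsionless connection on an open set U ⊆ ℝ^n satisfying Γ^i_{kk} = −Γ^i_{ki} for i ≠ k and Γ^i_{kl} = 0 for pairwise distinct i,k,l. Then the condition R^k_{lmi} c^n_{pk} + R^k_{lip} c^n_{mk} + R^k_{lpm} c^n_{ik} = 0 for all indices, with c^i_{jk} = δ^i_j δ^i_k, holds if and only if for all pairwise distinct indices k, i, m: (i) ∂_i Γ^k_{mk} − ∂_m Γ^k_{ik} = 0 and (ii) ∂_i Γ^k_{km} − Γ^k_{km} Γ^m_{im} + Γ^k_{ik} Γ^k_{km} − Γ^k_{ik} Γ^i_{im} = 0 (no summation over repeated indices in (i) and (ii)). -/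
import Mathlib


open scoped BigOperators

noncomputable section

/-- Vector fields on (an open subset of) `ℝⁿ`, given by their components. -/
abbrev VF (n : ℕ) := Fin n → (Fin n → ℝ) → ℝ

/-- Structure functions `c^i_{jk}` (and also Christoffel symbols `Γ^i_{jk}`). -/
abbrev SC (n : ℕ) := Fin n → Fin n → Fin n → (Fin n → ℝ) → ℝ

/-- Partial derivative `∂_j f` at `x`. -/
def pd {n : ℕ} (f : (Fin n → ℝ) → ℝ) (j : Fin n) (x : Fin n → ℝ) : ℝ :=
  fderiv ℝ f x (Pi.single j 1)

/-- Curvature tensor `R^i_{lmp} = ∂_m Γ^i_{pl} − ∂_p Γ^i_{ml} + Γ^i_{ms} Γ^s_{pl} − Γ^i_{ps} Γ^s_{ml}`. -/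
def Riem {n : ℕ} (Γ : SC n) (i l m p : Fin n) (x : Fin n → ℝ) : ℝ :=
  pd (Γ i p l) m x - pd (Γ i m l) p x
    + ∑ s, (Γ i m s x * Γ s p l x - Γ i p s x * Γ s m l x)

/-- Canonical structure functions `c^i_{jk} = δ^i_j δ^i_k`. -/
def cdelta {n : ℕ} : SC n := fun i j k _ => if j = i ∧ k = i then 1 else 0

lemma pd_congr {n : ℕ} {U : Set (Fin n → ℝ)} (hU : IsOpen U) {f g : (Fin n → ℝ) → ℝ}
    (h : ∀ y ∈ U, f y = g y) {x : Fin n → ℝ} (hx : x ∈ U) (j : Fin n) :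
    pd f j x = pd g j x := by
  unfold pd
  rw [Filter.EventuallyEq.fderiv_eq (Filter.eventuallyEq_of_mem (hU.mem_nhds hx) h)]

lemma pd_zero {n : ℕ} (j : Fin n) (x : Fin n → ℝ) :
    pd (fun _ : Fin n → ℝ => (0:ℝ)) j x = 0 := by
  simp [pd]

lemma pd_neg {n : ℕ} (f : (Fin n → ℝ) → ℝ) (j : Fin n) (x : Fin n → ℝ) :
    pd (fun y => -(f y)) j x = -(pd f j x) := by
  simp [pd, fderiv_neg]

lemma sum_two_collapse {n : ℕ} (a b : Fin n) (hab : a ≠ b) (f : Fin n → ℝ) (c d : ℝ)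
    (h : ∀ s, f s = if s = a then c else if s = b then d else 0) :
    ∑ s, f s = c + d := by
  have h2 : ∀ s, f s = (if s = a then c else 0) + (if s = b then d else 0) := by
    intro s
    rcases eq_or_ne s a with rfl | h1
    · rw [h s]; simp [hab]
    · rcases eq_or_ne s b with rfl | hb
      · rw [h s]; simp [h1]
      · rw [h s]; simp [h1, hb]
  rw [Finset.sum_congr rfl (fun s _ => h2 s), Finset.sum_add_distrib]
  simp

lemma riem_anti {n : ℕ} (Γ : SC n) (a l m p : Fin n) (x : Fin n → ℝ) :
    Riem Γ a l m p x = -(Riem Γ a l p m x) := by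
  unfold Riem
  have h : (∑ s, (Γ a p s x * Γ s m l x - Γ a m s x * Γ s p l x))
      = -∑ s, (Γ a m s x * Γ s p l x - Γ a p s x * Γ s m l x) := by
    rw [← Finset.sum_neg_distrib]
    exact Finset.sum_congr rfl fun _ _ => by ring
  rw [h]; ring

lemma sum_cdelta {n : ℕ} (q c : Fin n) (x : Fin n → ℝ) (f : Fin n → ℝ) :
    (∑ k, f k * cdelta q c k x) = if c = q then f q else 0 := by
  simp only [cdelta]
  by_cases hc : c = q
  · simp [hc, Finset.sum_ite_eq', Finset.sum_ite_eq]
  · simp [hc]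

lemma sum_eval {n : ℕ} (Γ : SC n) (q p m i l : Fin n) (x : Fin n → ℝ) :
    ∑ k, (Riem Γ k l m i x * cdelta q p k x + Riem Γ k l i p x * cdelta q m k x
      + Riem Γ k l p m x * cdelta q i k x)
    = (if p = q then Riem Γ q l m i x else 0) + (if m = q then Riem Γ q l i p x else 0)
      + (if i = q then Riem Γ q l p m x else 0) := by
  rw [Finset.sum_add_distrib, Finset.sum_add_distrib,
    sum_cdelta q p x (fun k => Riem Γ k l m i x),
    sum_cdelta q m x (fun k => Riem Γ k l i p x),
    sum_cdelta q i x (fun k => Riem Γ k l p m x)]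

theorem statement_16 {n : ℕ} (U : Set (Fin n → ℝ)) (hU : IsOpen U)
    (Γ : SC n)
    (hΓ_smooth : ∀ i j k, ContDiffOn ℝ (⊤ : ℕ∞) (Γ i j k) U)
    (hΓ_tor : ∀ i j k, ∀ x ∈ U, Γ i j k x = Γ i k j x)
    (heg1 : ∀ i k, i ≠ k → ∀ x ∈ U, Γ i k k x = -(Γ i k i x))
    (heg2 : ∀ i k l, i ≠ k → k ≠ l → i ≠ l → ∀ x ∈ U, Γ i k l x = 0) :
    (∀ q p m i l, ∀ x ∈ U,
        ∑ k, (Riem Γ k l m i x * cdelta q p k x + Riem Γ k l i p x * cdelta q m k x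
          + Riem Γ k l p m x * cdelta q i k x) = 0)
      ↔ (∀ k i m, k ≠ i → i ≠ m → k ≠ m → ∀ x ∈ U,
        pd (Γ k m k) i x - pd (Γ k i k) m x = 0 ∧
          pd (Γ k k m) i x - Γ k k m x * Γ m i m x + Γ k i k x * Γ k k m x
            - Γ k i k x * Γ i i m x = 0) := by
  -- the normal form of the Christoffel symbols on U
  have hGval : ∀ a b c, ∀ x ∈ U, Γ a b c x
      = if b = a then Γ a a c x else if c = a then Γ a a b x
        else if b = c then -(Γ a a b x) else 0 := by
    intro a b c x hx
    by_cases h1 : b = a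
    · rw [if_pos h1, h1]
    · rw [if_neg h1]
      by_cases h2 : c = a
      · rw [if_pos h2, h2]
        exact hΓ_tor a b a x hx
      · rw [if_neg h2]
        by_cases h3 : b = c
        · rw [if_pos h3, ← h3, heg1 a b (Ne.symm h1) x hx, hΓ_tor a b a x hx]
        · rw [if_neg h3]
          exact heg2 a b c (Ne.symm h1) h3 (Ne.symm h2) x hx
  -- key computation of the curvature components
  have hkey : ∀ q m i l, m ≠ q → i ≠ q → ∀ x ∈ U,
      Riem Γ q l m i x = pd (Γ q i l) m x - pd (Γ q m l) i x
        + Γ q q m x * Γ q i l x - Γ q q m x * Γ m i l x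
        - Γ q q i x * Γ q m l x + Γ q q i x * Γ i m l x := by
    intro q m i l hm hi x hx
    unfold Riem
    rw [Finset.sum_sub_distrib]
    have h2 : ∑ s, Γ q m s x * Γ s i l x
        = Γ q q m x * Γ q i l x + (-(Γ q q m x)) * Γ m i l x := by
      apply sum_two_collapse q m (Ne.symm hm)
      intro s
      rw [hGval q m s x hx]
      rcases eq_or_ne s q with rfl | h1
      · simp [hm]
      · rcases eq_or_ne s m with rfl | hsm
        · simp [hm, h1]
        · simp [hm, h1, hsm, Ne.symm hsm]
    have h3 : ∑ s, Γ q i s x * Γ s m l x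
        = Γ q q i x * Γ q m l x + (-(Γ q q i x)) * Γ i m l x := by
      apply sum_two_collapse q i (Ne.symm hi)
      intro s
      rw [hGval q i s x hx]
      rcases eq_or_ne s q with rfl | h1
      · simp [hi]
      · rcases eq_or_ne s i with rfl | hsi
        · simp [hi, h1]
        · simp [hi, h1, hsi, Ne.symm hsi]
    rw [h2, h3]; ring
  constructor
  · -- forward direction
    intro hA k i m hki him hkm x hx
    have hB : ∀ l m' i', m' ≠ k → i' ≠ k → Riem Γ k l m' i' x = 0 := by
      intro l m' i' hm hi
      have h := hA k k m' i' l x hx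
      rw [sum_eval] at h
      simpa [hm, hi] using h
    constructor
    · -- condition (i)
      have h0 := hB k m i (Ne.symm hkm) (Ne.symm hki)
      rw [hkey k m i k (Ne.symm hkm) (Ne.symm hki) x hx] at h0
      have e1 : Γ m i k x = 0 := heg2 m i k (Ne.symm him) (Ne.symm hki) (Ne.symm hkm) x hx
      have e2 : Γ i m k x = 0 := heg2 i m k him (Ne.symm hkm) (Ne.symm hki) x hx
      have e3 : Γ k i k x = Γ k k i x := hΓ_tor k i k x hx
      have e4 : Γ k m k x = Γ k k m x := hΓ_tor k m k x hx
      rw [e1, e2, e3, e4] at h0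
      linear_combination -h0
    · -- condition (ii)
      have h0 := hB m m i (Ne.symm hkm) (Ne.symm hki)
      rw [hkey k m i m (Ne.symm hkm) (Ne.symm hki) x hx] at h0
      have e1 : pd (Γ k i m) m x = 0 := by
        rw [pd_congr hU (g := fun _ => 0) (heg2 k i m hki him hkm) hx m]
        exact pd_zero m x
      have e2 : pd (Γ k m m) i x = -(pd (Γ k k m) i x) := by
        have hh : ∀ y ∈ U, Γ k m m y = -(Γ k k m y) := by
          intro y hy; rw [heg1 k m hkm y hy, hΓ_tor k m k y hy]
        rw [pd_congr hU hh hx i, pd_neg]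
      have e3 : Γ k i m x = 0 := heg2 k i m hki him hkm x hx
      have e4 : Γ k m m x = -(Γ k k m x) := by
        rw [heg1 k m hkm x hx, hΓ_tor k m k x hx]
      have e5 : Γ i m m x = -(Γ i i m x) := by
        rw [heg1 i m him x hx, hΓ_tor i m i x hx]
      rw [e1, e2, e3, e4, e5] at h0
      rw [hΓ_tor m i m x hx, hΓ_tor k i k x hx]
      rw [hΓ_tor m i m x hx] at h0
      linear_combination h0
  · -- backward direction
    intro hC q p m i l x hx
    have hB : ∀ m' i', m' ≠ q → i' ≠ q → ∀ l', Riem Γ q l' m' i' x = 0 := by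
      intro m' i' hm' hi' l'
      rcases eq_or_ne m' i' with heq | hmi
      · rw [heq]
        have h := riem_anti Γ q l' i' i' x
        linarith
      rcases eq_or_ne l' q with heq | hlq
      · rw [heq, hkey q m' i' q hm' hi' x hx]
        obtain ⟨h1, _⟩ := hC q i' m' (Ne.symm hi') (Ne.symm hmi) (Ne.symm hm') x hx
        rw [heg2 m' i' q hmi hi' hm' x hx, heg2 i' m' q (Ne.symm hmi) hm' hi' x hx,
          hΓ_tor q i' q x hx, hΓ_tor q m' q x hx]
        linear_combination -h1
      rcases eq_or_ne l' m' with heq | hlm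
      · rw [heq, hkey q m' i' m' hm' hi' x hx]
        obtain ⟨_, h2⟩ := hC q i' m' (Ne.symm hi') (Ne.symm hmi) (Ne.symm hm') x hx
        have e1 : pd (Γ q i' m') m' x = 0 := by
          rw [pd_congr hU (g := fun _ => 0)
            (heg2 q i' m' (Ne.symm hi') (Ne.symm hmi) (Ne.symm hm')) hx m']
          exact pd_zero m' x
        have e2 : pd (Γ q m' m') i' x = -(pd (Γ q q m') i' x) := by
          have hh : ∀ y ∈ U, Γ q m' m' y = -(Γ q q m' y) := fun y hy => by
            rw [heg1 q m' (Ne.symm hm') y hy, hΓ_tor q m' q y hy]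
          rw [pd_congr hU hh hx i', pd_neg]
        rw [e1, e2, heg2 q i' m' (Ne.symm hi') (Ne.symm hmi) (Ne.symm hm') x hx,
          heg1 q m' (Ne.symm hm') x hx, hΓ_tor q m' q x hx,
          heg1 i' m' (Ne.symm hmi) x hx, hΓ_tor i' m' i' x hx]
        rw [hΓ_tor q i' q x hx] at h2
        linear_combination h2
      rcases eq_or_ne l' i' with heq | hli
      · rw [heq, hkey q m' i' i' hm' hi' x hx]
        obtain ⟨_, h2⟩ := hC q m' i' (Ne.symm hm') hmi (Ne.symm hi') x hx
        have e1 : pd (Γ q i' i') m' x = -(pd (Γ q q i') m' x) := by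
          have hh : ∀ y ∈ U, Γ q i' i' y = -(Γ q q i' y) := fun y hy => by
            rw [heg1 q i' (Ne.symm hi') y hy, hΓ_tor q i' q y hy]
          rw [pd_congr hU hh hx m', pd_neg]
        have e2 : pd (Γ q m' i') i' x = 0 := by
          rw [pd_congr hU (g := fun _ => 0)
            (heg2 q m' i' (Ne.symm hm') hmi (Ne.symm hi')) hx i']
          exact pd_zero i' x
        rw [e1, e2, heg1 q i' (Ne.symm hi') x hx, hΓ_tor q i' q x hx,
          heg1 m' i' hmi x hx, hΓ_tor m' i' m' x hx,
          heg2 q m' i' (Ne.symm hm') hmi (Ne.symm hi') x hx]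
        rw [hΓ_tor q m' q x hx] at h2
        linear_combination -h2
      · rw [hkey q m' i' l' hm' hi' x hx]
        have hil : i' ≠ l' := Ne.symm hli
        have hml : m' ≠ l' := Ne.symm hlm
        have hql : q ≠ l' := Ne.symm hlq
        have e1 : pd (Γ q i' l') m' x = 0 := by
          rw [pd_congr hU (g := fun _ => 0) (heg2 q i' l' (Ne.symm hi') hil hql) hx m']
          exact pd_zero m' x
        have e2 : pd (Γ q m' l') i' x = 0 := by
          rw [pd_congr hU (g := fun _ => 0) (heg2 q m' l' (Ne.symm hm') hml hql) hx i']
          exact pd_zero i' x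
        rw [e1, e2, heg2 q i' l' (Ne.symm hi') hil hql x hx,
          heg2 m' i' l' hmi hil hml x hx, heg2 q m' l' (Ne.symm hm') hml hql x hx,
          heg2 i' m' l' (Ne.symm hmi) hml hil x hx]
        ring
    rw [sum_eval]
    by_cases hp : p = q <;> by_cases hm2 : m = q <;> by_cases hi2 : i = q
    · rw [if_pos hp, if_pos hm2, if_pos hi2, hp, hm2, hi2]
      have h := riem_anti Γ q l q q x
      linarith
    · rw [if_pos hp, if_pos hm2, if_neg hi2, hp, hm2]
      have h := riem_anti Γ q l q i x
      linarith
    · rw [if_pos hp, if_neg hm2, if_pos hi2, hp, hi2]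
      have h := riem_anti Γ q l m q x
      linarith
    · rw [if_pos hp, if_neg hm2, if_neg hi2, hB m i hm2 hi2 l]
      ring
    · rw [if_neg hp, if_pos hm2, if_pos hi2, hm2, hi2]
      have h := riem_anti Γ q l q p x
      linarith
    · rw [if_neg hp, if_pos hm2, if_neg hi2, hB i p hi2 hp l]
      ring
    · rw [if_neg hp, if_neg hm2, if_pos hi2, hB p m hp hm2 l]
      ring
    · rw [if_neg hp, if_neg hm2, if_neg hi2]
      ring
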